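/- Let ω be a weight. (i) If ω ∈ A_p for some p > 1, then ω satisfies the doubling condition. (ii) Conversely, if ω satisfies the doubling condition and there exist C, q > 1 such that ω ∈ RH_q, then there exist a constant C′ and p > 1 such that ω ∈ A_p. -/

import Mathlib

/-!
(i) For `J ⊆ I` Hölder's inequality gives `#J ^ p ≤ ω(J) σ(J) ^ (p - 1)` with `σ = ω ^ (-1/(p-1))`;
together with the `A_p` bound `ω(I) σ(I) ^ (p - 1) ≤ C #I ^ p` this yields
`ω(I) / ω(J) ≤ C (#I / #J) ^ p`, and each child of `I` has at least a third of its length.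

(ii) Reverse Hölder makes the weight `A_∞`: a subset of a window carrying at most half of its
mass misses a fixed fraction `η` of the window. Stop the dyadic subwindows of `[0, k)` at the
levels `λ_n = A (2D)⁻ⁿ`, `A` the average. By doubling, the windows stopped at level `λ_(n+1)`
carry at most half of the mass of those stopped at level `λ_n`, so
`#{i < k | a i ≤ λ_n} ≤ (1 - η) ^ n k`. Summing `a i ^ (-s)` over these layers gives
`avg (a ^ (-s)) ≤ K A ^ (-s)` once `(2D) ^ s (1 - η) < 1`, which is `A_p` for `p = 1 + 1/s`.
Measure preservation moves the almost-everywhere hypotheses from the orbit of `x` to the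
orbits of all `T^[m] x`, i.e. to every window of the orbit of `x`.
-/

open MeasureTheory Finset

/-- `ω ∈ A_p` with constant `C`. -/
def MemAp {X : Type*} [MeasurableSpace X] (μ : Measure X) (T : X → X) (ω : X → ℝ)
    (p C : ℝ) : Prop :=
  ∀ᵐ x ∂μ, ∀ k : ℕ, 0 < k →
    ((k : ℝ)⁻¹ * ∑ i ∈ Finset.range k, ω (T^[i] x)) *
      ((k : ℝ)⁻¹ * ∑ i ∈ Finset.range k, ω (T^[i] x) ^ (-(1 / (p - 1)))) ^ (p - 1) ≤ C

/-- `ω ∈ RH_q` with constant `C`. -/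
def MemRH {X : Type*} [MeasurableSpace X] (μ : Measure X) (T : X → X) (ω : X → ℝ)
    (C q : ℝ) : Prop :=
  ∀ᵐ x ∂μ, ∀ k : ℕ, 0 < k →
    ((k : ℝ)⁻¹ * ∑ i ∈ Finset.range k, ω (T^[i] x) ^ q) ^ (1 / q) ≤
      C * ((k : ℝ)⁻¹ * ∑ i ∈ Finset.range k, ω (T^[i] x))

/-- `g` satisfies the doubling condition. -/
def Doubling {X : Type*} [MeasurableSpace X] (μ : Measure X) (T : X → X) (g : X → ℝ) : Prop :=
  ∃ C : ℝ, ∀ᵐ x ∂μ, ∀ k : ℕ, 2 ≤ k →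
    ((∑ j ∈ Finset.range ((k - 1) / 2 + 1), g (T^[j] x))⁻¹ *
        ∑ j ∈ Finset.range k, g (T^[j] x) ≤ C) ∧
    ((∑ j ∈ Finset.Ico ((k - 1) / 2 + 1) k, g (T^[j] x))⁻¹ *
        ∑ j ∈ Finset.range k, g (T^[j] x) ≤ C)

open Filter Topology

/-- `MemAp μ T ω p C` unfolds to `∀ᵐ x ∂μ, PrefixAp (fun i => ω (T^[i] x)) p C`. -/
def PrefixAp (a : ℕ → ℝ) (p C : ℝ) : Prop :=
  ∀ k : ℕ, 0 < k →
    ((k : ℝ)⁻¹ * ∑ i ∈ range k, a i) *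
      ((k : ℝ)⁻¹ * ∑ i ∈ range k, a i ^ (-(1 / (p - 1)))) ^ (p - 1) ≤ C

theorem inv_mul_mul_inv_mul_rpow_sub_one {k x y : ℝ} (p : ℝ) (hk : 0 < k) (hy : 0 ≤ y) :
    (k⁻¹ * x) * (k⁻¹ * y) ^ (p - 1) = (k ^ p)⁻¹ * (x * y ^ (p - 1)) := by
  rw [Real.mul_rpow (inv_nonneg.2 hk.le) hy, Real.inv_rpow hk.le, Real.rpow_sub_one hk.ne']
  field_simp

theorem card_rpow_le_sum_mul_sum_rpow {ι : Type*} (J : Finset ι) {a : ι → ℝ}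
    (ha : ∀ i, 0 < a i) {p : ℝ} (hp : 1 < p) :
    (#J : ℝ) ^ p ≤ (∑ i ∈ J, a i) * (∑ i ∈ J, a i ^ (-(1 / (p - 1)))) ^ (p - 1) := by
  set s := 1 / (p - 1)
  have hsp : s * (p - 1) = 1 := one_div_mul_cancel (sub_pos.2 hp).ne'
  have hHolder := Real.inner_le_weight_mul_Lp_of_nonneg J hp.le (fun i => a i ^ (-s))
    (fun i => a i ^ s) (fun i => (Real.rpow_pos_of_pos (ha i) _).le)
    (fun i => (Real.rpow_pos_of_pos (ha i) _).le)
  have hone : ∀ i, a i ^ (-s) * a i ^ s = 1 := fun i => by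
    rw [← Real.rpow_add (ha i), neg_add_cancel, Real.rpow_zero]
  have hself : ∀ i, a i ^ (-s) * (a i ^ s) ^ p = a i := fun i => by
    rw [← Real.rpow_mul (ha i).le, ← Real.rpow_add (ha i),
      show -s + s * p = s * (p - 1) by ring, hsp, Real.rpow_one]
  simp only [hone, hself, sum_const, nsmul_eq_mul, mul_one] at hHolder
  calc (#J : ℝ) ^ p
      ≤ ((∑ i ∈ J, a i ^ (-s)) ^ (1 - p⁻¹) * (∑ i ∈ J, a i) ^ p⁻¹) ^ p :=
        Real.rpow_le_rpow (by positivity) hHolder (by linarith)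
    _ = (∑ i ∈ J, a i) * (∑ i ∈ J, a i ^ (-s)) ^ (p - 1) := by
        have hσ : 0 ≤ ∑ i ∈ J, a i ^ (-s) :=
          sum_nonneg fun i _ => (Real.rpow_pos_of_pos (ha i) _).le
        have hA : 0 ≤ ∑ i ∈ J, a i := sum_nonneg fun i _ => (ha i).le
        rw [Real.mul_rpow (by positivity) (by positivity), ← Real.rpow_mul hσ,
          ← Real.rpow_mul hA, inv_mul_cancel₀ (by linarith), Real.rpow_one, mul_comm]
        congr 2
        field_simp

theorem sum_mul_card_rpow_le_of_prefixAp {a : ℕ → ℝ} (ha : ∀ i, 0 < a i) {p C : ℝ} (hp : 1 < p)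
    (hA : PrefixAp a p C) {k : ℕ} (hk : 0 < k) {J : Finset ℕ} (hJ : J ⊆ range k) :
    (∑ i ∈ range k, a i) * (#J : ℝ) ^ p ≤ C * (k : ℝ) ^ p * ∑ i ∈ J, a i := by
  have hσ : ∀ s : Finset ℕ, 0 ≤ ∑ i ∈ s, a i ^ (-(1 / (p - 1))) := fun s =>
    sum_nonneg fun i _ => (Real.rpow_pos_of_pos (ha i) _).le
  have hkp : (0 : ℝ) < (k : ℝ) ^ p := by positivity
  have hAk := hA k hk
  rw [inv_mul_mul_inv_mul_rpow_sub_one p (by positivity) (hσ _), inv_mul_le_iff₀ hkp] at hAk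
  calc (∑ i ∈ range k, a i) * (#J : ℝ) ^ p
      ≤ (∑ i ∈ range k, a i) * ((∑ i ∈ J, a i) * (∑ i ∈ J, a i ^ (-(1 / (p - 1)))) ^ (p - 1)) :=
        mul_le_mul_of_nonneg_left (card_rpow_le_sum_mul_sum_rpow J ha hp)
          (sum_nonneg fun i _ => (ha i).le)
    _ ≤ (∑ i ∈ range k, a i) *
          ((∑ i ∈ J, a i) * (∑ i ∈ range k, a i ^ (-(1 / (p - 1)))) ^ (p - 1)) := by
        refine mul_le_mul_of_nonneg_left (mul_le_mul_of_nonneg_left ?_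
          (sum_nonneg fun i _ => (ha i).le)) (sum_nonneg fun i _ => (ha i).le)
        exact Real.rpow_le_rpow (hσ J) (sum_le_sum_of_subset_of_nonneg hJ
          fun i _ _ => (Real.rpow_pos_of_pos (ha i) _).le) (by linarith)
    _ ≤ C * (k : ℝ) ^ p * ∑ i ∈ J, a i := by
        nlinarith [sum_nonneg fun i (_ : i ∈ J) => (ha i).le]

theorem inv_sum_mul_sum_le_of_prefixAp {a : ℕ → ℝ} (ha : ∀ i, 0 < a i) {p C : ℝ} (hp : 1 < p)
    (hA : PrefixAp a p C) {k : ℕ} (hk : 0 < k) {J : Finset ℕ} (hJ : J ⊆ range k)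
    (hJk : k ≤ 3 * #J) :
    (∑ i ∈ J, a i)⁻¹ * ∑ i ∈ range k, a i ≤ C * 3 ^ p := by
  have hJ0 : 0 < #J := by omega
  have hJa : 0 < ∑ i ∈ J, a i := sum_pos (fun i _ => ha i) (card_pos.1 hJ0)
  have hJp : (0 : ℝ) < (#J : ℝ) ^ p := by positivity
  have hkJ : (k : ℝ) ^ p ≤ 3 ^ p * (#J : ℝ) ^ p := by
    rw [← Real.mul_rpow (by norm_num) (by positivity)]
    exact Real.rpow_le_rpow (by positivity) (by exact_mod_cast hJk) (by linarith)
  have hmain := sum_mul_card_rpow_le_of_prefixAp ha hp hA hk hJ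
  have hC : 0 ≤ C := by
    by_contra! hC
    nlinarith [mul_pos (sum_pos (fun i _ => ha i) (nonempty_range_iff.2 hk.ne')) hJp,
      mul_pos (by positivity : (0 : ℝ) < (k : ℝ) ^ p) hJa]
  rw [inv_mul_le_iff₀ hJa]
  refine le_of_mul_le_mul_right ?_ hJp
  calc (∑ i ∈ range k, a i) * (#J : ℝ) ^ p ≤ C * (k : ℝ) ^ p * ∑ i ∈ J, a i := hmain
    _ ≤ C * (3 ^ p * (#J : ℝ) ^ p) * ∑ i ∈ J, a i := by gcongr
    _ = (∑ i ∈ J, a i) * (C * 3 ^ p) * (#J : ℝ) ^ p := by ring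

theorem doubling_of_memAp {X : Type*} [MeasurableSpace X] {μ : Measure X} {T : X → X}
    {ω : X → ℝ} (hω : ∀ x, 0 < ω x) {p C : ℝ} (hp : 1 < p) (hA : MemAp μ T ω p C) :
    Doubling μ T ω := by
  refine ⟨C * 3 ^ p, ?_⟩
  filter_upwards [hA] with x hx k hk
  have hAx : PrefixAp (fun i => ω (T^[i] x)) p C := hx
  exact ⟨inv_sum_mul_sum_le_of_prefixAp (fun i => hω _) hp hAx (by omega)
      (range_subset_range.2 (by omega)) (by rw [card_range]; omega),
    inv_sum_mul_sum_le_of_prefixAp (fun i => hω _) hp hAx (by omega)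
      (by rw [range_eq_Ico]; exact Ico_subset_Ico_left (Nat.zero_le _))
      (by rw [Nat.card_Ico]; omega)⟩

def WindowRH (a : ℕ → ℝ) (C q : ℝ) : Prop :=
  ∀ m k : ℕ, 0 < k →
    ((k : ℝ)⁻¹ * ∑ i ∈ Ico m (m + k), a i ^ q) ^ (1 / q) ≤
      C * ((k : ℝ)⁻¹ * ∑ i ∈ Ico m (m + k), a i)

def WindowDoubling (a : ℕ → ℝ) (D : ℝ) : Prop :=
  ∀ m k : ℕ, 2 ≤ k →
    ∑ i ∈ Ico m (m + k), a i ≤ D * ∑ i ∈ Ico m (m + ((k - 1) / 2 + 1)), a i ∧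
    ∑ i ∈ Ico m (m + k), a i ≤ D * ∑ i ∈ Ico (m + ((k - 1) / 2 + 1)) (m + k), a i

/-- Under `RH_q` with constant `C`, the complement of a subset carrying at most half of the mass of
a window fills at least this fraction of it (see `card_le_of_sum_le_half`). -/
noncomputable def rhEta (C q : ℝ) : ℝ := ((2 * C) ^ q)⁻¹ ^ (q - 1)⁻¹

theorem rhEta_pos {C q : ℝ} (hC : 0 < C) : 0 < rhEta C q := by
  unfold rhEta; positivity

theorem rhEta_lt_one {C q : ℝ} (hC : 1 < 2 * C) (hq : 1 < q) : rhEta C q < 1 :=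
  Real.rpow_lt_one (by positivity) (inv_lt_one_of_one_lt₀ (Real.one_lt_rpow hC (by linarith)))
    (inv_pos.2 (by linarith))

theorem rhEta_le_of_half_rpow_le {C q ν t : ℝ} (hC : 0 < C) (hq : 1 < q) (hν : 0 < ν)
    (ht : 0 ≤ t) (h : (ν / 2) ^ q ≤ t ^ (q - 1) * (C * ν) ^ q) : rhEta C q ≤ t := by
  have hηt : ((2 * C) ^ q)⁻¹ ≤ t ^ (q - 1) := by
    rw [← mul_le_mul_iff_left₀ (by positivity : 0 < (C * ν) ^ q), ← Real.inv_rpow (by positivity),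
      ← Real.mul_rpow (by positivity) (by positivity),
      show (2 * C)⁻¹ * (C * ν) = ν / 2 by field_simp]
    exact h
  calc rhEta C q ≤ (t ^ (q - 1)) ^ (q - 1)⁻¹ :=
        Real.rpow_le_rpow (by positivity) hηt (inv_nonneg.2 (by linarith))
    _ = t := Real.rpow_rpow_inv ht (by linarith)

theorem card_le_of_sum_le_half {ι : Type*} {W E : Finset ι} {a : ι → ℝ} {C q : ℝ}
    (ha : ∀ i, 0 < a i) (hC : 0 < C) (hq : 1 < q)
    (hRH : ((#W : ℝ)⁻¹ * ∑ i ∈ W, a i ^ q) ^ (1 / q) ≤ C * ((#W : ℝ)⁻¹ * ∑ i ∈ W, a i))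
    (hEW : E ⊆ W) (hE : ∑ i ∈ E, a i ≤ (∑ i ∈ W, a i) / 2) :
    (#E : ℝ) ≤ (1 - rhEta C q) * #W := by
  classical
  rcases W.eq_empty_or_nonempty with rfl | hW
  · simp [subset_empty.1 hEW]
  set k : ℝ := (#W : ℝ)
  set ν := ∑ i ∈ W, a i
  have hk : 0 < k := by simp [k, hW.card_pos]
  have hν : 0 < ν := sum_pos (fun i _ => ha i) hW
  have hF : ν / 2 ≤ ∑ i ∈ W \ E, a i := by
    linarith [sum_sdiff hEW (f := a)]
  have hRH' : ∑ i ∈ W, a i ^ q ≤ k * (C * (k⁻¹ * ν)) ^ q := by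
    have hq0 : 0 ≤ k⁻¹ * ∑ i ∈ W, a i ^ q :=
      mul_nonneg (inv_nonneg.2 hk.le) (sum_nonneg fun i _ => (Real.rpow_pos_of_pos (ha i) q).le)
    rw [one_div, Real.rpow_inv_le_iff_of_pos hq0 (by positivity) (by linarith)] at hRH
    rwa [inv_mul_le_iff₀ hk] at hRH
  have hη := rhEta_le_of_half_rpow_le (t := #(W \ E) / k) hC hq hν (by positivity) <| calc
      (ν / 2) ^ q ≤ (∑ i ∈ W \ E, a i) ^ q := Real.rpow_le_rpow (by positivity) hF (by linarith)
      _ ≤ (#(W \ E) : ℝ) ^ (q - 1) * ∑ i ∈ W \ E, a i ^ q :=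
          Real.rpow_sum_le_const_mul_sum_rpow_of_nonneg _ hq.le fun i _ => (ha i).le
      _ ≤ (#(W \ E) : ℝ) ^ (q - 1) * (k * (C * (k⁻¹ * ν)) ^ q) := by
          gcongr
          exact (sum_le_sum_of_subset_of_nonneg sdiff_subset
            fun i _ _ => (Real.rpow_pos_of_pos (ha i) _).le).trans hRH'
      _ = (#(W \ E) / k) ^ (q - 1) * (C * ν) ^ q := by
          rw [Real.div_rpow (by positivity) hk.le, show C * (k⁻¹ * ν) = k⁻¹ * (C * ν) by ring,
            Real.mul_rpow (by positivity) (by positivity), Real.inv_rpow hk.le,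
            Real.rpow_sub_one hk.ne']
          field_simp
  rw [le_div_iff₀ hk, card_sdiff_of_subset hEW, Nat.cast_sub (card_le_card hEW)] at hη
  linarith

/-- The union of the maximal dyadic subwindows of `[m, m + k)` on which the average of `a` is at
most `l` (a discrete Calderón–Zygmund decomposition). -/
noncomputable def stoppingSet (a : ℕ → ℝ) (l : ℝ) (m k : ℕ) : Finset ℕ :=
  if ∑ i ∈ Ico m (m + k), a i ≤ l * k then Ico m (m + k)
  else if k < 2 then ∅
  else stoppingSet a l m ((k - 1) / 2 + 1) ∪
    stoppingSet a l (m + ((k - 1) / 2 + 1)) (k - ((k - 1) / 2 + 1))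
termination_by k
decreasing_by all_goals omega

section StoppingSet

variable {a : ℕ → ℝ} {l : ℝ} {m k : ℕ}

theorem stoppingSet_of_le (h : ∑ i ∈ Ico m (m + k), a i ≤ l * k) :
    stoppingSet a l m k = Ico m (m + k) := by
  rw [stoppingSet, if_pos h]

theorem stoppingSet_of_lt_two (h : l * k < ∑ i ∈ Ico m (m + k), a i) (hk : k < 2) :
    stoppingSet a l m k = ∅ := by
  rw [stoppingSet, if_neg h.not_ge, if_pos hk]

theorem stoppingSet_of_two_le (h : l * k < ∑ i ∈ Ico m (m + k), a i) (hk : 2 ≤ k) :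
    stoppingSet a l m k = stoppingSet a l m ((k - 1) / 2 + 1) ∪
      stoppingSet a l (m + ((k - 1) / 2 + 1)) (k - ((k - 1) / 2 + 1)) := by
  rw [stoppingSet, if_neg h.not_ge, if_neg (by omega)]

theorem stoppingSet_subset (a : ℕ → ℝ) (l : ℝ) (m k : ℕ) :
    stoppingSet a l m k ⊆ Ico m (m + k) := by
  induction k using Nat.strong_induction_on generalizing m with
  | _ k ih =>
    rcases le_or_gt (∑ i ∈ Ico m (m + k), a i) (l * k) with h | h
    · rw [stoppingSet_of_le h]
    rcases lt_or_ge k 2 with hk | hk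
    · simp [stoppingSet_of_lt_two h hk]
    rw [stoppingSet_of_two_le h hk]
    refine union_subset ((ih _ (by omega) m).trans (Ico_subset_Ico le_rfl (by omega)))
      ((ih _ (by omega) _).trans (Ico_subset_Ico (by omega) (by omega)))

theorem disjoint_stoppingSet_halves (a : ℕ → ℝ) (l : ℝ) (m k : ℕ) :
    Disjoint (stoppingSet a l m ((k - 1) / 2 + 1))
      (stoppingSet a l (m + ((k - 1) / 2 + 1)) (k - ((k - 1) / 2 + 1))) := by
  refine disjoint_left.2 fun i hi hi' => ?_
  have := mem_Ico.1 (stoppingSet_subset a l _ _ hi)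
  have := mem_Ico.1 (stoppingSet_subset a l _ _ hi')
  omega

theorem sum_stoppingSet_le (a : ℕ → ℝ) (l : ℝ) (m k : ℕ) :
    ∑ i ∈ stoppingSet a l m k, a i ≤ l * #(stoppingSet a l m k) := by
  induction k using Nat.strong_induction_on generalizing m with
  | _ k ih =>
    rcases le_or_gt (∑ i ∈ Ico m (m + k), a i) (l * k) with h | h
    · simpa [stoppingSet_of_le h] using h
    rcases lt_or_ge k 2 with hk | hk
    · simp [stoppingSet_of_lt_two h hk]
    rw [stoppingSet_of_two_le h hk, sum_union (disjoint_stoppingSet_halves a l m k),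
      card_union_of_disjoint (disjoint_stoppingSet_halves a l m k)]
    push_cast
    linarith [ih ((k - 1) / 2 + 1) (by omega) m, ih (k - ((k - 1) / 2 + 1)) (by omega)
      (m + ((k - 1) / 2 + 1))]

theorem mem_stoppingSet {i : ℕ} (hi : i ∈ Ico m (m + k)) (hai : a i ≤ l) :
    i ∈ stoppingSet a l m k := by
  induction k using Nat.strong_induction_on generalizing m with
  | _ k ih =>
    rw [mem_Ico] at hi
    rcases le_or_gt (∑ i ∈ Ico m (m + k), a i) (l * k) with h | h
    · rw [stoppingSet_of_le h, mem_Ico]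
      exact hi
    rcases lt_or_ge k 2 with hk | hk
    · -- a single point `i` with `a i ≤ l` is itself a stopping window
      obtain rfl : k = 1 := by omega
      obtain rfl : i = m := by omega
      simp at h
      linarith
    rw [stoppingSet_of_two_le h hk, mem_union]
    by_cases hleft : i < m + ((k - 1) / 2 + 1)
    · exact Or.inl (ih _ (by omega) (mem_Ico.2 ⟨hi.1, hleft⟩))
    · exact Or.inr (ih _ (by omega) (mem_Ico.2 ⟨by omega, by omega⟩))

end StoppingSet

section GoodLambda

variable {a : ℕ → ℝ} {C q D : ℝ}

theorem card_stoppingSet_le (ha : ∀ i, 0 < a i) (hC : 0 < C) (hq : 1 < q)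
    (hRH : WindowRH a C q) (hD : WindowDoubling a D) (hD1 : 1 ≤ D) {l l' : ℝ} (hl' : 0 ≤ l')
    (hll' : 2 * D * l' ≤ l) (m k : ℕ) (hmass : 2 * l' * k ≤ ∑ i ∈ Ico m (m + k), a i) :
    (#(stoppingSet a l' m k) : ℝ) ≤ (1 - rhEta C q) * #(stoppingSet a l m k) := by
  induction k using Nat.strong_induction_on generalizing m with
  | _ k ih =>
    have hcardW : #(Ico m (m + k)) = k := by simp
    rcases le_or_gt (∑ i ∈ Ico m (m + k), a i) (l * k) with h | h
    · -- `[m, m + k)` stops at level `l`; what stops at level `l'` carries at most half its mass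
      rw [stoppingSet_of_le h]
      rcases Nat.eq_zero_or_pos k with rfl | hk
      · simpa using card_le_card (stoppingSet_subset a l' m 0)
      refine card_le_of_sum_le_half ha hC hq (by rw [hcardW]; exact hRH m k hk)
        (stoppingSet_subset a l' m k) ?_
      have hcard : (#(stoppingSet a l' m k) : ℝ) ≤ k := by
        exact_mod_cast hcardW ▸ card_le_card (stoppingSet_subset a l' m k)
      nlinarith [sum_stoppingSet_le a l' m k]
    have hl'l : l' * k ≤ l * k := by
      apply mul_le_mul_of_nonneg_right _ (Nat.cast_nonneg k)
      nlinarith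
    rcases lt_or_ge k 2 with hk | hk
    · simp [stoppingSet_of_lt_two h hk, stoppingSet_of_lt_two (hl'l.trans_lt h) hk]
    rw [stoppingSet_of_two_le h hk, stoppingSet_of_two_le (hl'l.trans_lt h) hk,
      card_union_of_disjoint (disjoint_stoppingSet_halves a l m k),
      card_union_of_disjoint (disjoint_stoppingSet_halves a l' m k)]
    push_cast
    -- by doubling, each half of `[m, m + k)` still has average above `2 l'`
    have hhalf : ∀ m' k' : ℕ, k' ≤ k → ∑ i ∈ Ico m (m + k), a i ≤ D * ∑ i ∈ Ico m' (m' + k'), a i →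
        2 * l' * k' ≤ ∑ i ∈ Ico m' (m' + k'), a i := by
      intro m' k' hk' hdbl
      have h1 : 2 * l' * k' ≤ 2 * l' * k := by gcongr
      have h2 : D * (2 * l' * k) ≤ l * k := by nlinarith
      nlinarith
    obtain ⟨hleft, hright⟩ := hD m k hk
    rw [mul_add]
    exact add_le_add (ih _ (by omega) m (hhalf _ _ (by omega) hleft))
      (ih _ (by omega) _ (hhalf _ _ (by omega) (by
        rwa [show m + ((k - 1) / 2 + 1) + (k - ((k - 1) / 2 + 1)) = m + k by omega])))

theorem card_stoppingSet_le_pow (ha : ∀ i, 0 < a i) (hC : 1 ≤ C) (hq : 1 < q)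
    (hRH : WindowRH a C q) (hD : WindowDoubling a D) (hD1 : 1 ≤ D) {A : ℝ} (hA : 0 ≤ A) {m k : ℕ}
    (hAk : A * k ≤ ∑ i ∈ Ico m (m + k), a i) (n : ℕ) :
    (#(stoppingSet a (A * (2 * D)⁻¹ ^ n) m k) : ℝ) ≤ (1 - rhEta C q) ^ n * k := by
  induction n with
  | zero => simpa using card_le_card (stoppingSet_subset a A m k)
  | succ n ih =>
    have hlevel : 2 * D * (A * (2 * D)⁻¹ ^ (n + 1)) = A * (2 * D)⁻¹ ^ n := by
      rw [pow_succ, show 2 * D * (A * ((2 * D)⁻¹ ^ n * (2 * D)⁻¹)) =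
        A * (2 * D)⁻¹ ^ n * (2 * D * (2 * D)⁻¹) by ring, mul_inv_cancel₀ (by positivity), mul_one]
    have hmass : 2 * (A * (2 * D)⁻¹ ^ (n + 1)) * k ≤ ∑ i ∈ Ico m (m + k), a i := by
      have hβ : (2 * D)⁻¹ ≤ 2⁻¹ := inv_anti₀ two_pos (by linarith)
      have hβn := pow_le_of_le_one (n := n + 1) (by positivity) (hβ.trans (by norm_num)) (by omega)
      have h2 : 2 * (2 * D)⁻¹ ^ (n + 1) ≤ 1 := by linarith
      linarith [mul_le_mul_of_nonneg_right h2 (mul_nonneg hA (Nat.cast_nonneg k))]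
    have hη := rhEta_lt_one (C := C) (by linarith) hq
    calc (#(stoppingSet a (A * (2 * D)⁻¹ ^ (n + 1)) m k) : ℝ)
        ≤ (1 - rhEta C q) * #(stoppingSet a (A * (2 * D)⁻¹ ^ n) m k) :=
          card_stoppingSet_le ha (by linarith) hq hRH hD hD1 (by positivity) hlevel.le m k hmass
      _ ≤ (1 - rhEta C q) * ((1 - rhEta C q) ^ n * k) := by gcongr
      _ = (1 - rhEta C q) ^ (n + 1) * k := by ring

theorem card_filter_le_pow (ha : ∀ i, 0 < a i) (hC : 1 ≤ C) (hq : 1 < q)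
    (hRH : WindowRH a C q) (hD : WindowDoubling a D) (hD1 : 1 ≤ D) {k : ℕ} (hk : 0 < k) (n : ℕ) :
    (#{i ∈ range k | a i ≤ (k : ℝ)⁻¹ * (∑ j ∈ range k, a j) * (2 * D)⁻¹ ^ n} : ℝ) ≤
      (1 - rhEta C q) ^ n * k := by
  have hA : 0 ≤ (k : ℝ)⁻¹ * ∑ j ∈ range k, a j :=
    mul_nonneg (by positivity) (sum_nonneg fun i _ => (ha i).le)
  have hAk : (k : ℝ)⁻¹ * (∑ j ∈ range k, a j) * k ≤ ∑ i ∈ Ico 0 (0 + k), a i := by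
    rw [zero_add, ← range_eq_Ico, mul_comm, mul_inv_cancel_left₀ (by positivity)]
  refine le_trans ?_ (card_stoppingSet_le_pow ha hC hq hRH hD hD1 hA hAk n)
  exact_mod_cast card_le_card fun i hi => by
    rw [mem_filter, mem_range] at hi
    exact mem_stoppingSet (mem_Ico.2 ⟨Nat.zero_le i, by omega⟩) hi.2

end GoodLambda

section LayerCake

variable {φ : ℝ → ℝ} {lam : ℕ → ℝ}

theorem apply_le_add_sum_ite (hφ : AntitoneOn φ (Set.Ioi 0)) (hφ0 : ∀ n, 0 ≤ φ (lam n))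
    (hlam : ∀ n, 0 < lam n) {x : ℝ} (N : ℕ) (hN : lam N < x) :
    φ x ≤ φ (lam 0) + ∑ n ∈ range N, if x ≤ lam n then φ (lam (n + 1)) else 0 := by
  have hterms : ∀ M, 0 ≤ ∑ n ∈ range M, if x ≤ lam n then φ (lam (n + 1)) else 0 :=
    fun M => sum_nonneg fun n _ => by split_ifs <;> simp [hφ0]
  induction N with
  | zero => simpa using hφ (hlam 0) (hlam 0 |>.trans hN) hN.le
  | succ N ih =>
    rw [sum_range_succ]
    by_cases hx : lam N < x
    · have := ih hx
      split_ifs <;> linarith [hφ0 (N + 1)]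
    · rw [if_pos (not_lt.1 hx)]
      linarith [hφ (hlam (N + 1)) (hlam (N + 1) |>.trans hN) hN.le, hφ0 0, hterms N]

theorem sum_apply_le_card_mul_add_sum {ι : Type*} (s : Finset ι) (f : ι → ℝ)
    (hφ : AntitoneOn φ (Set.Ioi 0)) (hφ0 : ∀ n, 0 ≤ φ (lam n)) (hlam : ∀ n, 0 < lam n) (N : ℕ)
    (hN : ∀ i ∈ s, lam N < f i) :
    ∑ i ∈ s, φ (f i) ≤
      #s * φ (lam 0) + ∑ n ∈ range N, φ (lam (n + 1)) * #{i ∈ s | f i ≤ lam n} := by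
  classical
  calc ∑ i ∈ s, φ (f i)
      ≤ ∑ i ∈ s, (φ (lam 0) + ∑ n ∈ range N, if f i ≤ lam n then φ (lam (n + 1)) else 0) :=
        sum_le_sum fun i hi => apply_le_add_sum_ite hφ hφ0 hlam N (hN i hi)
    _ = #s * φ (lam 0) + ∑ n ∈ range N, φ (lam (n + 1)) * #{i ∈ s | f i ≤ lam n} := by
        rw [sum_add_distrib, sum_const, nsmul_eq_mul, sum_comm]
        congr 1
        refine sum_congr rfl fun n _ => ?_
        rw [← sum_filter, sum_const, nsmul_eq_mul, mul_comm]

end LayerCake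

theorem exists_pos_rpow_lt {b c : ℝ} (hb : 0 < b) (hc : 1 < c) : ∃ s : ℝ, 0 < s ∧ b ^ s < c := by
  have hlim : Tendsto (fun s : ℝ => b ^ s) (𝓝[>] 0) (𝓝 1) := by
    simpa using (Real.continuousAt_const_rpow (b := 0) hb.ne').tendsto.mono_left
      nhdsWithin_le_nhds
  obtain ⟨s, hsc, hs⟩ := ((hlim.eventually (gt_mem_nhds hc)).and self_mem_nhdsWithin).exists
  exact ⟨s, hs, hsc⟩

theorem exists_forall_mul_pow_lt {ι : Type*} (s : Finset ι) {f : ι → ℝ} (hf : ∀ i ∈ s, 0 < f i)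
    (A : ℝ) {β : ℝ} (hβ0 : 0 ≤ β) (hβ1 : β < 1) : ∃ N : ℕ, ∀ i ∈ s, A * β ^ N < f i := by
  have hlim : Tendsto (fun n : ℕ => A * β ^ n) atTop (𝓝 0) := by
    simpa using (tendsto_pow_atTop_nhds_zero_of_lt_one hβ0 hβ1).const_mul A
  exact ((eventually_all_finset _).2 fun i hi => hlim.eventually_lt_const (hf i hi)).exists

theorem mul_inv_pow_rpow_neg {A b : ℝ} (hA : 0 ≤ A) (hb : 0 < b) (s : ℝ) (n : ℕ) :
    (A * b⁻¹ ^ n) ^ (-s) = A ^ (-s) * (b ^ s) ^ n := by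
  rw [Real.mul_rpow hA (by positivity), inv_pow, Real.inv_rpow (by positivity),
    Real.rpow_neg (pow_nonneg hb.le n) s, inv_inv, ← Real.rpow_pow_comm hb.le]

section ApOfRH

variable {a : ℕ → ℝ} {C q D : ℝ}

theorem sum_rpow_neg_le (ha : ∀ i, 0 < a i) (hC : 1 ≤ C) (hq : 1 < q) (hRH : WindowRH a C q)
    (hD : WindowDoubling a D) (hD1 : 1 ≤ D) {s : ℝ} (hs : 0 < s)
    (hρ : (2 * D) ^ s * (1 - rhEta C q) < 1) {k : ℕ} (hk : 0 < k) :
    (k : ℝ)⁻¹ * ∑ i ∈ range k, a i ^ (-s) ≤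
      (1 + (2 * D) ^ s / (1 - (2 * D) ^ s * (1 - rhEta C q))) *
        ((k : ℝ)⁻¹ * ∑ i ∈ range k, a i) ^ (-s) := by
  set η := rhEta C q
  set r := (2 * D) ^ s
  set ρ := r * (1 - η)
  set A := (k : ℝ)⁻¹ * ∑ i ∈ range k, a i
  have hA : 0 < A := by
    have := sum_pos (fun i _ => ha i) (nonempty_range_iff.2 hk.ne')
    positivity
  have hη := rhEta_lt_one (C := C) (by linarith) hq
  have hρ0 : 0 ≤ ρ := mul_nonneg (by positivity) (by linarith)
  obtain ⟨N, hN⟩ := exists_forall_mul_pow_lt (range k) (fun i _ => ha i) A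
    (by positivity : (0 : ℝ) ≤ (2 * D)⁻¹) (inv_lt_one_of_one_lt₀ (by linarith))
  have hlc := sum_apply_le_card_mul_add_sum (range k) a (φ := fun x => x ^ (-s))
    (lam := fun n => A * (2 * D)⁻¹ ^ n)
    (Real.antitoneOn_rpow_Ioi_of_exponent_nonpos (by linarith))
    (fun n => by positivity) (fun n => by positivity) N hN
  simp only [mul_inv_pow_rpow_neg hA.le (by positivity : (0 : ℝ) < 2 * D), card_range, pow_zero,
    mul_one] at hlc
  rw [inv_mul_le_iff₀ (by positivity)]
  calc ∑ i ∈ range k, a i ^ (-s)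
      ≤ k * A ^ (-s) + ∑ n ∈ range N, A ^ (-s) * r ^ (n + 1) *
          #{i ∈ range k | a i ≤ A * (2 * D)⁻¹ ^ n} := hlc
    _ ≤ k * A ^ (-s) + ∑ n ∈ range N, A ^ (-s) * r ^ (n + 1) * ((1 - η) ^ n * k) :=
        add_le_add le_rfl (sum_le_sum fun n _ => mul_le_mul_of_nonneg_left
          (card_filter_le_pow ha hC hq hRH hD hD1 hk n) (by positivity))
    _ = k * A ^ (-s) * (1 + r * ∑ n ∈ range N, ρ ^ n) := by
        rw [mul_add, mul_one, mul_sum, mul_sum]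
        congr 1
        refine sum_congr rfl fun n _ => ?_
        simp only [ρ, mul_pow, pow_succ]
        ring
    _ ≤ k * A ^ (-s) * (1 + r / (1 - ρ)) := by
        have hgeom := geom_sum_Ico_le_of_lt_one (m := 0) (n := N) hρ0 hρ
        rw [← range_eq_Ico, pow_zero] at hgeom
        gcongr
        rw [div_eq_mul_one_div]
        gcongr
    _ = k * ((1 + r / (1 - ρ)) * A ^ (-s)) := by ring

theorem exists_prefixAp_of_windowRH_of_windowDoubling (hC : 1 ≤ C) (hq : 1 < q) (hD : 1 ≤ D) :
    ∃ C' p : ℝ, 1 < p ∧ ∀ a : ℕ → ℝ, (∀ i, 0 < a i) → WindowRH a C q → WindowDoubling a D →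
      PrefixAp a p C' := by
  have hη0 := rhEta_pos (q := q) (by linarith : 0 < C)
  have hη1 := rhEta_lt_one (C := C) (by linarith) hq
  obtain ⟨s, hs, hr⟩ := exists_pos_rpow_lt (b := 2 * D) (by positivity)
    ((one_lt_inv₀ (by linarith)).2 (by linarith : 1 - rhEta C q < 1))
  have hρ : (2 * D) ^ s * (1 - rhEta C q) < 1 := by
    calc (2 * D) ^ s * (1 - rhEta C q) < (1 - rhEta C q)⁻¹ * (1 - rhEta C q) :=
          mul_lt_mul_of_pos_right hr (by linarith)
      _ = 1 := inv_mul_cancel₀ (by linarith)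
  set K := 1 + (2 * D) ^ s / (1 - (2 * D) ^ s * (1 - rhEta C q))
  have hK : 0 ≤ K := by
    have : 0 < 1 - (2 * D) ^ s * (1 - rhEta C q) := by linarith
    positivity
  refine ⟨K ^ s⁻¹, 1 + s⁻¹, by linarith [inv_pos.2 hs], fun a ha hRH hDbl k hk => ?_⟩
  rw [add_sub_cancel_left, one_div, inv_inv]
  set A := (k : ℝ)⁻¹ * ∑ i ∈ range k, a i
  have hA : 0 < A := by
    have := sum_pos (fun i _ => ha i) (nonempty_range_iff.2 hk.ne')
    positivity
  have hσ : 0 ≤ (k : ℝ)⁻¹ * ∑ i ∈ range k, a i ^ (-s) :=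
    mul_nonneg (by positivity) (sum_nonneg fun i _ => (Real.rpow_pos_of_pos (ha i) _).le)
  calc A * ((k : ℝ)⁻¹ * ∑ i ∈ range k, a i ^ (-s)) ^ s⁻¹ ≤ A * (K * A ^ (-s)) ^ s⁻¹ :=
        mul_le_mul_of_nonneg_left (Real.rpow_le_rpow hσ
          (sum_rpow_neg_le ha hC hq hRH hDbl hD hs hρ hk) (by positivity)) hA.le
    _ = K ^ s⁻¹ := by
        rw [Real.mul_rpow hK (by positivity), ← Real.rpow_mul hA.le, neg_mul,
          mul_inv_cancel₀ hs.ne', Real.rpow_neg_one]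
        field_simp

end ApOfRH

theorem MeasureTheory.MeasurePreserving.ae_forall_iterate {X : Type*} [MeasurableSpace X]
    {μ : Measure X} {T : X → X} (hT : MeasurePreserving T μ μ) {P : X → Prop}
    (h : ∀ᵐ x ∂μ, P x) : ∀ᵐ x ∂μ, ∀ m : ℕ, P (T^[m] x) :=
  ae_all_iff.2 fun m => (hT.iterate m).quasiMeasurePreserving.ae h

theorem sum_Ico_iterate_iterate {X : Type*} (f : X → ℝ) (T : X → X) (x : X) (m j k : ℕ) :
    ∑ i ∈ Ico j k, f (T^[i] (T^[m] x)) = ∑ i ∈ Ico (m + j) (m + k), f (T^[i] x) := by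
  rw [add_comm m j, add_comm m k, ← sum_Ico_add']
  simp only [Function.iterate_add_apply]

theorem sum_range_iterate_iterate {X : Type*} (f : X → ℝ) (T : X → X) (x : X) (m k : ℕ) :
    ∑ i ∈ range k, f (T^[i] (T^[m] x)) = ∑ i ∈ Ico m (m + k), f (T^[i] x) := by
  rw [range_eq_Ico, sum_Ico_iterate_iterate, add_zero]

section Orbits

variable {X : Type*} [MeasurableSpace X] {μ : Measure X} {T : X → X} {ω : X → ℝ}

theorem windowRH_of_memRH (hT : MeasurePreserving T μ μ) {C q : ℝ} (h : MemRH μ T ω C q) :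
    ∀ᵐ x ∂μ, WindowRH (fun i => ω (T^[i] x)) C q := by
  filter_upwards [hT.ae_forall_iterate h] with x hx m k hk
  have := hx m k hk
  rwa [sum_range_iterate_iterate (fun y => ω y ^ q), sum_range_iterate_iterate ω] at this

theorem exists_windowDoubling_of_doubling (hT : MeasurePreserving T μ μ) (hω : ∀ x, 0 < ω x)
    (h : Doubling μ T ω) : ∃ D, 1 ≤ D ∧ ∀ᵐ x ∂μ, WindowDoubling (fun i => ω (T^[i] x)) D := by
  obtain ⟨D, hD⟩ := h
  refine ⟨max D 1, le_max_right _ _, ?_⟩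
  have hmax : ∀ {S c : ℝ}, 0 < c → c⁻¹ * S ≤ D → S ≤ max D 1 * c := fun hc h => by
    rw [inv_mul_le_iff₀ hc] at h
    nlinarith [le_max_left D 1]
  filter_upwards [hT.ae_forall_iterate hD] with x hx m k hk
  obtain ⟨hleft, hright⟩ := hx m k hk
  simp only [sum_range_iterate_iterate ω, sum_Ico_iterate_iterate ω] at hleft hright
  exact ⟨hmax (sum_pos (fun i _ => hω _) (nonempty_Ico.2 (by omega))) hleft,
    hmax (sum_pos (fun i _ => hω _) (nonempty_Ico.2 (by omega))) hright⟩

end Orbits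

theorem stmt19_general {X : Type*} [MeasurableSpace X] (μ : Measure X)
    (T : X → X) (hTerg : Ergodic T μ)
    (ω : X → ℝ) (hωpos : ∀ x, 0 < ω x)
     :
    ((∃ p C : ℝ, 1 < p ∧ MemAp μ T ω p C) → Doubling μ T ω) ∧
    (Doubling μ T ω → (∃ C q : ℝ, 1 < C ∧ 1 < q ∧ MemRH μ T ω C q) →
      ∃ C' p : ℝ, 1 < p ∧ MemAp μ T ω p C') := by
  refine ⟨fun ⟨p, C, hp, hA⟩ => doubling_of_memAp hωpos hp hA, fun hDbl ⟨C, q, hC, hq, hRH⟩ => ?_⟩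
  have hT := hTerg.toMeasurePreserving
  obtain ⟨D, hD, hDx⟩ := exists_windowDoubling_of_doubling hT hωpos hDbl
  obtain ⟨C', p, hp, hAp⟩ := exists_prefixAp_of_windowRH_of_windowDoubling hC.le hq hD
  refine ⟨C', p, hp, ?_⟩
  filter_upwards [windowRH_of_memRH hT hRH, hDx] with x hRHx hDx
  exact hAp _ (fun i => hωpos _) hRHx hDx

theorem stmt19 {X : Type*} [MeasurableSpace X] (μ : Measure X)
    [IsProbabilityMeasure μ] [NullSingletonClass μ] (hcomp : μ.IsComplete)
    (T : X → X) (hTbij : Function.Bijective T) (hTerg : Ergodic T μ)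
    (ω : X → ℝ) (hω : Measurable ω) (hωpos : ∀ x, 0 < ω x)
     :
    ((∃ p C : ℝ, 1 < p ∧ MemAp μ T ω p C) → Doubling μ T ω) ∧
    (Doubling μ T ω → (∃ C q : ℝ, 1 < C ∧ 1 < q ∧ MemRH μ T ω C q) →
      ∃ C' p : ℝ, 1 < p ∧ MemAp μ T ω p C') :=
  stmt19_general μ T hTerg ω hωpos
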